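/- Let X be a finite T₀-space and let f : X → X be a continuous function with f ≤ Id_X in the pointwise specialization order. Then there exists N such that f^N = f^{N+1}; writing f^∞ = f^N for such N, the following hold: f^∞ ≤ f ≤ Id_X, f^∞ ∘ f^∞ = f^∞, the image f^∞(X) is a dbp–retract of X, and for every x ∈ X one has x ∈ f^∞(X) if and only if f(x) = x. -/

import Mathlib

open unitInterval

set_option autoImplicit false

universe u v

def specLE {X : Type*} [TopologicalSpace X] (x y : X) : Prop :=
  ∀ U : Set X, IsOpen U → y ∈ U → x ∈ U

def IsCofibration {A : Type*} {X : Type*} [TopologicalSpace A] [TopologicalSpace X]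
    (i : C(A, X)) : Prop :=
  ∀ (Z : Type v) [TopologicalSpace Z] (f : C(X, Z)) (H : C(A × I, Z)),
    (∀ a, H (a, 0) = f (i a)) →
    ∃ G : C(X × I, Z),
      (∀ x, G (x, 0) = f x) ∧ ∀ a t, G (i a, t) = H (a, t)

def IsDownBeatPoint {X : Type*} [TopologicalSpace X] (S : Set X) (x : X) : Prop :=
  x ∈ S ∧ ∃ m ∈ S, m ≠ x ∧ specLE m x ∧
    ∀ z ∈ S, z ≠ x → specLE z x → specLE z m

inductive IsDbpRetract {X : Type*} [TopologicalSpace X] : Set X → Set X → Prop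
  | refl (S : Set X) : IsDbpRetract S S
  | step {S T : Set X} (x : X) (hx : IsDownBeatPoint S x)
      (h : IsDbpRetract (S \ {x}) T) : IsDbpRetract S T

def minOpen {X : Type*} [TopologicalSpace X] (x : X) : Set X :=
  ⋂₀ {U : Set X | IsOpen U ∧ x ∈ U}

/-!
Order `X` by `specLE`. Since `f ≤ id`, the iterates `f^[n]` form a decreasing sequence in the
finite poset `X → X`, so they stabilize at some `f^∞ = f^[N]`, whose image is the fixed-point set
of `f`. The map `f^∞` is a monotone idempotent deflation, and every point `x` of a set
`S ⊇ f^∞(X)` that is minimal in `S \ f^∞(X)` is a down beat point of `S`: the maximum of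
the points of `S` strictly below `x` is `f^∞ x`. Removing such points one at a time reaches `f^∞(X)`.
-/

theorem specLE_iff_specializes {X : Type*} [TopologicalSpace X] {x y : X} :
    specLE x y ↔ x ⤳ y :=
  specializes_iff_forall_open.symm

/-- Mathlib's `specializationOrder` is the dual of this order. -/
abbrev specLEOrder (X : Type*) [TopologicalSpace X] [T0Space X] : PartialOrder X where
  le := specLE
  le_refl _ _ _ := id
  le_trans _ _ _ hxy hyz U hU hz := hxy U hU (hyz U hU hz)
  le_antisymm _ _ hxy hyx :=
    (specLE_iff_specializes.1 hxy).antisymm (specLE_iff_specializes.1 hyx) |>.eq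

namespace Function

variable {α : Type*} {f : α → α} {N : ℕ}

theorem exists_iterate_succ_eq_of_le_id [PartialOrder α] [Finite α] (hf : f ≤ id) :
    ∃ N, f^[N + 1] = f^[N] := by
  obtain ⟨N, hN⟩ := WellFoundedLT.antitone_chain_condition (antitone_iterate_of_le_id hf)
  exact ⟨N, (hN (N + 1) N.le_succ).symm⟩

theorem mem_range_iterate_iff_isFixedPt (hN : f^[N + 1] = f^[N]) {x : α} :
    x ∈ Set.range f^[N] ↔ IsFixedPt f x := by
  constructor
  · rintro ⟨y, rfl⟩
    rw [IsFixedPt, ← iterate_succ_apply' f N, hN]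
  · exact fun hx => ⟨x, hx.iterate N⟩

theorem iterate_iterate_of_iterate_succ_eq (hN : f^[N + 1] = f^[N]) (x : α) :
    f^[N] (f^[N] x) = f^[N] x :=
  ((mem_range_iterate_iff_isFixedPt hN).1 ⟨x, rfl⟩).iterate N

theorem iterate_le_of_iterate_succ_eq [Preorder α] (hf : f ≤ id) (hN : f^[N + 1] = f^[N])
    (x : α) : f^[N] x ≤ f x := by
  rw [← hN, iterate_succ_apply]
  exact iterate_le_id_of_le_id hf N (f x)

end Function

theorem IsDbpRetract.of_forall_ssubset {X : Type*} [TopologicalSpace X] [Finite X] {T : Set X}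
    (hT : ∀ S, T ⊂ S → ∃ x ∈ S \ T, IsDownBeatPoint S x) {S : Set X} (hTS : T ⊆ S) :
    IsDbpRetract S T := by
  induction S using WellFoundedLT.induction with
  | _ S ih =>
    obtain rfl | hlt := hTS.eq_or_ssubset
    · exact .refl T
    obtain ⟨x, ⟨hxS, hxT⟩, hx⟩ := hT S hlt
    exact .step x hx <| ih _ (Set.sdiff_singleton_ssubset.2 hxS) fun y hy =>
      ⟨hTS hy, fun hyx => hxT (hyx ▸ hy)⟩

section DeflationRetraction

attribute [local instance] specLEOrder

variable {X : Type*} [TopologicalSpace X] [T0Space X] {g : X → X}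

theorem isDownBeatPoint_of_minimal (hmono : Monotone g) (hle : g ≤ id)
    (hidem : ∀ x, g (g x) = g x) {S : Set X} (hS : Set.range g ⊆ S) {x : X}
    (hx : Minimal (· ∈ S \ Set.range g) x) : IsDownBeatPoint S x := by
  refine ⟨hx.prop.1, g x, hS ⟨x, rfl⟩, fun h => hx.prop.2 ⟨x, h⟩, hle x, ?_⟩
  intro z hzS hzx hzle
  by_cases hz : z ∈ Set.range g
  · obtain ⟨w, rfl⟩ := hz
    rw [← hidem w]
    exact hmono hzle
  · exact absurd (le_antisymm hzle (hx.2 ⟨hzS, hz⟩ hzle)) hzx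

theorem isDbpRetract_range [Finite X] (hmono : Monotone g) (hle : g ≤ id)
    (hidem : ∀ x, g (g x) = g x) {S : Set X} (hS : Set.range g ⊆ S) :
    IsDbpRetract S (Set.range g) := by
  refine IsDbpRetract.of_forall_ssubset (fun S' hS' => ?_) hS
  obtain ⟨x, hx⟩ :=
    (Set.toFinite (S' \ Set.range g)).exists_minimal (Set.nonempty_of_ssubset hS')
  exact ⟨x, hx.prop, isDownBeatPoint_of_minimal hmono hle hidem hS'.subset hx⟩

end DeflationRetraction

/-- Let `X` be a finite T₀-space and `f : X → X` continuous with
`f ≤ Id_X` pointwise in the specialization order. Then some iterate of `f` stabilizes: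
`f^N = f^{N+1}` for some `N`, and for any such `N` (writing `f^∞ = f^N`):
`f^∞ ≤ f ≤ Id_X`, `f^∞ ∘ f^∞ = f^∞`, the image `f^∞(X)` is a dbp–retract of `X`, and
`x ∈ f^∞(X)` iff `f x = x`. -/
theorem iterate_stabilizes_and_infty_properties
    {X : Type u} [TopologicalSpace X] [Finite X] [T0Space X]
    (f : C(X, X)) (hf : ∀ x, specLE (f x) x) :
    (∃ N : ℕ, (⇑f)^[N + 1] = (⇑f)^[N]) ∧
    ∀ N : ℕ, (⇑f)^[N + 1] = (⇑f)^[N] →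
      (∀ x, specLE ((⇑f)^[N] x) (f x)) ∧
      (∀ x, specLE (f x) x) ∧
      (∀ x, (⇑f)^[N] ((⇑f)^[N] x) = (⇑f)^[N] x) ∧
      IsDbpRetract (Set.univ : Set X) (Set.range ((⇑f)^[N])) ∧
      (∀ x, x ∈ Set.range ((⇑f)^[N]) ↔ f x = x) := by
  let := specLEOrder X
  have hle : ⇑f ≤ id := hf
  have hmono : Monotone f := fun x y hxy =>
    specLE_iff_specializes.2 ((specLE_iff_specializes.1 hxy).map f.continuous)
  refine ⟨Function.exists_iterate_succ_eq_of_le_id hle, fun N hN => ?_⟩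
  have hidem := Function.iterate_iterate_of_iterate_succ_eq hN
  exact ⟨Function.iterate_le_of_iterate_succ_eq hle hN, hf, hidem,
    isDbpRetract_range (hmono.iterate N) (Function.iterate_le_id_of_le_id hle N) hidem
      (Set.subset_univ _),
    fun _ => Function.mem_range_iterate_iff_isFixedPt hN⟩
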